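/- arXiv:1704.05829 — 3 statements merged into one kernel-verified Lean document; each statement's English description precedes it below -/
import Mathlib

section
/- Let a be a probability density on ℝ^d and ω : ℝ^d → (0,∞) with nonempty sublevel sets Ω_λ = {x : ω(x) < λ} for all λ > 0. Suppose η := limsup_{λ→0+} sup_{x∈Ω_λ} (a∗ω)(x)/ω(x) ∈ (0,∞). Then for any δ ∈ (0,1) there exists λ ∈ (0,1) such that, with φ(x) := min{λ, ω(x)} and γ := max{1, (1+δ)η}, one has (a∗φ)(x) ≤ γ φ(x) for all x ∈ ℝ^d. -/
open Filter MeasureTheory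

noncomputable def conv {d : ℕ} (f g : EuclideanSpace ℝ (Fin d) → ℝ) :
    EuclideanSpace ℝ (Fin d) → ℝ := fun x => ∫ y, f (x - y) * g y

/-- `nconv f n = f^{*(n+1)}`, the (n+1)-fold convolution of `f`. -/
noncomputable def nconv {d : ℕ} (f : EuclideanSpace ℝ (Fin d) → ℝ) :
    ℕ → EuclideanSpace ℝ (Fin d) → ℝ
  | 0 => f
  | n + 1 => conv f (nconv f n)

/-!
Choose `λ` so small that `a∗ω ≤ γ ω` on `Ω_λ`, which the definition of `η` permits. Since
`a ≥ 0`, convolution with `a` is monotone, and since `∫ a = 1` it fixes constants. On `Ω_λ`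
we get `a∗φ ≤ a∗ω ≤ γ ω = γ φ`; off `Ω_λ` we get `a∗φ ≤ a∗λ = λ ≤ γ λ = γ φ`.
-/

/-- In `ℝ` the supremum of an unbounded family is the junk value `0`. -/
theorem Real.frequently_bddAbove_of_limsup_iSup_ne_zero {α ι : Type*} {f : Filter α} [f.NeBot]
    {F : α → ι → ℝ} (h : limsup (fun l => ⨆ i, F l i) f ≠ 0) :
    ∃ᶠ l in f, BddAbove (Set.range (F l)) := by
  by_contra hfreq
  have hzero : ∀ᶠ l in f, ⨆ i, F l i = 0 :=
    (not_frequently.mp hfreq).mono fun _ => Real.iSup_of_not_bddAbove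
  exact h (by rw [limsup_congr hzero, limsup_const])

theorem le_biSup_of_bddAbove {α ι : Type*} [ConditionallyCompleteLattice α] {s : Set ι}
    {r : ι → α} (hb : BddAbove (Set.range fun i => ⨆ _ : i ∈ s, r i)) {i : ι} (hi : i ∈ s) :
    r i ≤ ⨆ i ∈ s, r i :=
  (ciSup_pos hi).symm.le.trans (le_ciSup hb i)

section Convolution

variable {d : ℕ} {a : EuclideanSpace ℝ (Fin d) → ℝ}

theorem conv_const (ha : ∫ x, a x = 1) (c : ℝ) (x : EuclideanSpace ℝ (Fin d)) :
    conv a (fun _ => c) x = c := by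
  simp only [conv, integral_mul_const, integral_sub_left_eq_self, ha, one_mul]

theorem conv_mono_right {g h : EuclideanSpace ℝ (Fin d) → ℝ} {x : EuclideanSpace ℝ (Fin d)}
    (ha : ∀ x, 0 ≤ a x) (hg : Integrable fun y => a (x - y) * g y)
    (hh : Integrable fun y => a (x - y) * h y) (hgh : g ≤ h) :
    conv a g x ≤ conv a h x :=
  integral_mono hg hh fun y => mul_le_mul_of_nonneg_left (hgh y) (ha _)

theorem integrable_mul_min {g : EuclideanSpace ℝ (Fin d) → ℝ} {x : EuclideanSpace ℝ (Fin d)}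
    {c : ℝ} (ha : ∀ x, 0 ≤ a x) (hac : Integrable fun y => a (x - y) * c)
    (hg : Integrable fun y => a (x - y) * g y) :
    Integrable fun y => a (x - y) * min c (g y) := by
  convert hac.inf hg using 1
  ext y
  exact mul_min_of_nonneg _ _ (ha _)

theorem conv_min_le {ω : EuclideanSpace ℝ (Fin d) → ℝ} {lam γ : ℝ}
    (ha : ∀ x, 0 ≤ a x) (ha_int : ∫ x, a x = 1)
    (hω : ∀ x, Integrable fun y => a (x - y) * ω y) (hlam : 0 ≤ lam) (hγ : 1 ≤ γ)
    (hsub : ∀ x, ω x < lam → conv a ω x ≤ γ * ω x) (x : EuclideanSpace ℝ (Fin d)) :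
    conv a (fun y => min lam (ω y)) x ≤ γ * min lam (ω x) := by
  have hconst : Integrable fun y => a (x - y) * lam :=
    ((integrable_of_integral_eq_one ha_int).comp_sub_left x).mul_const lam
  have hφ := integrable_mul_min ha hconst (hω x)
  rcases lt_or_ge (ω x) lam with hx | hx
  · rw [min_eq_right hx.le]
    exact (conv_mono_right ha hφ (hω x) fun y => min_le_right _ _).trans (hsub x hx)
  · rw [min_eq_left hx]
    calc conv a (fun y => min lam (ω y)) x
        ≤ conv a (fun _ => lam) x := conv_mono_right ha hφ hconst fun y => min_le_left _ _
      _ = lam := conv_const ha_int lam x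
      _ ≤ γ * lam := le_mul_of_one_le_left hlam hγ

end Convolution

theorem stmt_3_general {d : ℕ} (a ω : EuclideanSpace ℝ (Fin d) → ℝ)
    (ha_nn : ∀ x, 0 ≤ a x) (ha_int : ∫ x, a x = 1)
    (hω_pos : ∀ x, 0 < ω x)
    (hconv_def : ∀ x, Integrable (fun y => a (x - y) * ω y))
    (η : ℝ) (hη_pos : 0 < η)
    (hη : Filter.limsup
        (fun l => ⨆ x ∈ {x | ω x < l}, conv a ω x / ω x) (nhdsWithin 0 (Set.Ioi 0)) = η) :
    ∀ δ ∈ Set.Ioo (0:ℝ) 1, ∃ lam ∈ Set.Ioo (0:ℝ) 1,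
      ∀ x, conv a (fun y => min lam (ω y)) x ≤ max 1 ((1 + δ) * η) * min lam (ω x) := by
  intro δ hδ
  have hne : limsup (fun l => ⨆ x ∈ {x | ω x < l}, conv a ω x / ω x)
      (nhdsWithin 0 (Set.Ioi 0)) ≠ 0 := hη ▸ hη_pos.ne'
  have hsmall : ∀ᶠ l in nhdsWithin (0:ℝ) (Set.Ioi 0),
      ⨆ x ∈ {x | ω x < l}, conv a ω x / ω x < (1 + δ) * η :=
    eventually_lt_of_limsup_lt
      (by rw [hη]; exact lt_mul_of_one_lt_left hη_pos (by linarith [hδ.1]))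
      (by_contra fun h => hne (Real.limsup_of_not_isBoundedUnder h))
  obtain ⟨lam, hbdd, hlt, hlam⟩ :=
    ((Real.frequently_bddAbove_of_limsup_iSup_ne_zero hne).and_eventually
      (hsmall.and (Ioo_mem_nhdsGT one_pos))).exists
  refine ⟨lam, hlam,
    conv_min_le ha_nn ha_int hconv_def hlam.1.le (le_max_left _ _) fun x hx => ?_⟩
  have hratio : conv a ω x / ω x ≤ max 1 ((1 + δ) * η) :=
    (le_biSup_of_bddAbove hbdd hx).trans (hlt.le.trans (le_max_right _ _))
  rwa [div_le_iff₀ (hω_pos x)] at hratio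

theorem stmt_3 {d : ℕ} (a ω : EuclideanSpace ℝ (Fin d) → ℝ)
    (ha_meas : Measurable a) (ha_nn : ∀ x, 0 ≤ a x) (ha_int : ∫ x, a x = 1)
    (hω_pos : ∀ x, 0 < ω x)
    (hΩ : ∀ l > (0:ℝ), ∃ x, ω x < l)
    (hconv_def : ∀ x, Integrable (fun y => a (x - y) * ω y))
    (η : ℝ) (hη_pos : 0 < η)
    (hη : Filter.limsup
        (fun l => ⨆ x ∈ {x | ω x < l}, conv a ω x / ω x) (nhdsWithin 0 (Set.Ioi 0)) = η) :
    ∀ δ ∈ Set.Ioo (0:ℝ) 1, ∃ lam ∈ Set.Ioo (0:ℝ) 1,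
      ∀ x, conv a (fun y => min lam (ω y)) x ≤ max 1 ((1 + δ) * η) * min lam (ω x) :=
  stmt_3_general a ω ha_nn ha_int hω_pos hconv_def η hη_pos hη
end

section
/- Let a be a probability density on ℝ^d with a(x) ≤ b⁺(|x|) for a.a. x, where b⁺ is bounded, decreasing to 0 on ℝ₊ with ∫_0^∞ b⁺(s) s^{d−1} ds < ∞, and log b⁺(s) ∼ log b(s) as s → ∞ for b(s) = M (1+s)^{−(d+μ)}, μ, M > 0. Then with α₀ = (d + μ/2)/(d+μ), for every α ∈ (α₀, 1) the function ω(x) = b(|x|)^α satisfies limsup_{λ→0+} sup_{x: ω(x)<λ} (a∗ω)(x)/ω(x) ≤ 1. -/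
open Filter MeasureTheory

/-!
Write `ω = M^α (1 + |x|)^{-q}` with `q = α (d + μ)`; `α > α₀` gives `d < q`, so `ω` is
integrable. For `c < 1`, split `(a ∗ ω)(x)` at `|y| = c|x|`. Where
`|y| ≥ c|x|` the weight is at most `c^{-q} ω(x)`, and `a` has mass at most one. Where
`|y| < c|x|` we have `|x - y| ≥ (1 - c)|x|`, so `a(x - y) ≤ b⁺((1 - c)|x|)`, and this part is at
most `b⁺((1 - c)|x|) ‖ω‖₁`. Since `log b⁺ ∼ log b`, `b⁺ ≤ b^β` eventually for any `β < 1`, and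
choosing `β > α` makes `b⁺((1 - c)|x|) = o(ω(x))`. Hence `(a ∗ ω)/ω ≤ c^{-q} + o(1)` as
`|x| → ∞`, i.e. as `ω(x) → 0`, and `c^{-q}` can be taken arbitrarily close to `1`.
-/

open Asymptotics Topology Set

theorem mul_rpow_neg_rpow {M s : ℝ} (hM : 0 ≤ M) (hs : 0 ≤ s) (p β : ℝ) :
    (M * s ^ (-p)) ^ β = M ^ β * s ^ (-(β * p)) := by
  rw [Real.mul_rpow hM (Real.rpow_nonneg hs _), ← Real.rpow_mul hs, neg_mul, mul_comm p β]

theorem one_add_rpow_neg_le_of_mul_le {c s t q : ℝ} (hc0 : 0 < c) (hc1 : c ≤ 1) (ht : 0 ≤ t)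
    (hq : 0 ≤ q) (h : c * t ≤ s) : (1 + s) ^ (-q) ≤ c ^ (-q) * (1 + t) ^ (-q) := by
  rw [← Real.mul_rpow hc0.le (by linarith)]
  exact Real.rpow_le_rpow_of_nonpos (by positivity) (by nlinarith) (neg_nonpos.2 hq)

theorem tendsto_one_add_rpow_neg_atTop {r : ℝ} (hr : 0 < r) :
    Tendsto (fun t : ℝ => (1 + t) ^ (-r)) atTop (𝓝 0) :=
  (tendsto_rpow_neg_atTop hr).comp (tendsto_atTop_add_const_left atTop 1 tendsto_id)

theorem isLittleO_one_add_rpow_neg {r s : ℝ} (h : r < s) :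
    (fun t : ℝ => (1 + t) ^ (-s)) =o[atTop] fun t => (1 + t) ^ (-r) := by
  have hpos : ∀ᶠ t : ℝ in atTop, 0 < 1 + t :=
    eventually_gt_atTop (-1) |>.mono fun t ht => by linarith
  rw [isLittleO_iff_tendsto' (hpos.mono fun t ht h0 => absurd h0 (Real.rpow_pos_of_pos ht _).ne')]
  refine (tendsto_one_add_rpow_neg_atTop (sub_pos.2 h)).congr' (hpos.mono fun t ht => ?_)
  dsimp only
  rw [← Real.rpow_sub ht]
  ring_nf

theorem eventually_le_rpow_of_tendsto_log_div_log {ι : Type*} {l : Filter ι} {f g : ι → ℝ}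
    {β : ℝ} (hf : ∀ᶠ i in l, 0 < f i) (hg : ∀ᶠ i in l, 0 < g i) (hg0 : Tendsto g l (𝓝 0))
    (hβ : β < 1) (hfg : Tendsto (fun i => Real.log (f i) / Real.log (g i)) l (𝓝 1)) :
    ∀ᶠ i in l, f i ≤ g i ^ β := by
  filter_upwards [hf, hg, hg0.eventually_lt_const one_pos, hfg.eventually_const_lt hβ]
    with i hfi hgi hg1 hlt
  have hlog : Real.log (f i) < Real.log (g i ^ β) := by
    rw [Real.log_rpow hgi]
    exact (lt_div_iff_of_neg (Real.log_neg hgi hg1)).1 hlt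
  exact ((Real.log_lt_log_iff hfi (Real.rpow_pos_of_pos hgi _)).1 hlog).le

theorem isLittleO_comp_const_mul_of_le_rpow {g : ℝ → ℝ} {M p β q θ : ℝ} (hM : 0 ≤ M)
    (hg_nn : ∀ s, 0 ≤ g s) (hg : ∀ᶠ s in atTop, g s ≤ (M * (1 + s) ^ (-p)) ^ β)
    (hq : 0 ≤ q) (hqβp : q < β * p) (hθ0 : 0 < θ) (hθ1 : θ ≤ 1) :
    (fun t => g (θ * t)) =o[atTop] fun t => (1 + t) ^ (-q) := by
  refine IsBigO.trans_isLittleO ?_ (isLittleO_one_add_rpow_neg hqβp)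
  refine IsBigO.of_bound (M ^ β * θ ^ (-(β * p))) ?_
  filter_upwards [(tendsto_id.const_mul_atTop hθ0).eventually hg, eventually_ge_atTop 0]
    with t hgt ht
  rw [Real.norm_of_nonneg (hg_nn _), Real.norm_of_nonneg (Real.rpow_nonneg (by linarith) _),
    mul_assoc]
  calc g (θ * t) ≤ M ^ β * (1 + θ * t) ^ (-(β * p)) := by
        rwa [← mul_rpow_neg_rpow hM (by positivity)]
    _ ≤ M ^ β * (θ ^ (-(β * p)) * (1 + t) ^ (-(β * p))) := by
        gcongr
        exact one_add_rpow_neg_le_of_mul_le hθ0 hθ1 ht (by linarith) le_rfl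

theorem integral_mul_le_of_le_on_of_ae_le_off {X : Type*} [MeasurableSpace X] {ν : Measure X}
    {f w : X → ℝ} {S : Set X} {A B : ℝ} (hS : MeasurableSet S) (hf0 : ∀ y, 0 ≤ f y)
    (hw0 : ∀ y, 0 ≤ w y) (hf : Integrable f ν) (hw : Integrable w ν)
    (hfw : Integrable (fun y => f y * w y) ν) (hA0 : 0 ≤ A) (hB0 : 0 ≤ B)
    (hA : ∀ y ∈ S, w y ≤ A) (hB : ∀ᵐ y ∂ν, y ∉ S → f y ≤ B) :
    ∫ y, f y * w y ∂ν ≤ (∫ y, f y ∂ν) * A + B * ∫ y, w y ∂ν := by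
  rw [← integral_add_compl hS hfw]
  gcongr
  · calc ∫ y in S, f y * w y ∂ν ≤ ∫ y in S, f y * A ∂ν :=
          setIntegral_mono_on hfw.integrableOn (hf.mul_const A).integrableOn hS
            fun y hy => mul_le_mul_of_nonneg_left (hA y hy) (hf0 y)
      _ ≤ (∫ y, f y ∂ν) * A := by
          rw [integral_mul_const]
          exact mul_le_mul_of_nonneg_right (setIntegral_le_integral hf (.of_forall hf0)) hA0
  · calc ∫ y in Sᶜ, f y * w y ∂ν ≤ ∫ y in Sᶜ, B * w y ∂ν :=
          setIntegral_mono_on_ae hfw.integrableOn (hw.const_mul B).integrableOn hS.compl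
            (hB.mono fun y hy hyS => mul_le_mul_of_nonneg_right (hy hyS) (hw0 y))
      _ ≤ B * ∫ y, w y ∂ν := by
          rw [integral_const_mul]
          exact mul_le_mul_of_nonneg_left (setIntegral_le_integral hw (.of_forall hw0)) hB0

theorem limsup_iSup_sublevel_le {X : Type*} {ω F : X → ℝ} {C : ℝ} (hC : 0 ≤ C)
    (hF : ∀ x, 0 ≤ F x) (h : ∀ ε > 0, ∃ l₀ > 0, ∀ x, ω x < l₀ → F x ≤ C + ε) :
    limsup (fun l => ⨆ x ∈ {x | ω x < l}, F x) (𝓝[>] 0) ≤ C := by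
  refine le_of_forall_pos_le_add fun ε hε => ?_
  obtain ⟨l₀, hl₀, hF_le⟩ := h ε hε
  refine limsup_le_of_le (isCoboundedUnder_le_of_eventually_le _
    (.of_forall fun l => Real.iSup_nonneg fun x => Real.iSup_nonneg fun _ => hF x)) ?_
  filter_upwards [Ioo_mem_nhdsGT hl₀] with l hl
  exact Real.iSup_le (fun x => Real.iSup_le (fun hx => hF_le x (lt_trans hx hl.2))
    (by linarith)) (by linarith)

section Convolution

variable {d : ℕ}

theorem conv_const_mul (f g : EuclideanSpace ℝ (Fin d) → ℝ) (C : ℝ)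
    (x : EuclideanSpace ℝ (Fin d)) : conv f (fun y => C * g y) x = C * conv f g x := by
  simp only [conv, mul_left_comm _ C, integral_const_mul]

variable {a : EuclideanSpace ℝ (Fin d) → ℝ} {g : ℝ → ℝ} {q : ℝ}

theorem conv_one_add_rpow_neg_le (ha_nn : ∀ x, 0 ≤ a x) (ha_int : ∫ x, a x = 1)
    (hg_nn : ∀ s, 0 ≤ g s) (hg_anti : AntitoneOn g (Ici 0)) (hag : ∀ᵐ x, a x ≤ g ‖x‖)
    (hdq : (d : ℝ) < q) {c : ℝ} (hc0 : 0 < c) (hc1 : c ≤ 1)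
    (x : EuclideanSpace ℝ (Fin d)) :
    conv a (fun y => (1 + ‖y‖) ^ (-q)) x ≤ c ^ (-q) * (1 + ‖x‖) ^ (-q) +
      g ((1 - c) * ‖x‖) * ∫ y : EuclideanSpace ℝ (Fin d), (1 + ‖y‖) ^ (-q) := by
  have hq : 0 ≤ q := (Nat.cast_nonneg d).trans hdq.le
  have ha : Integrable a := by
    by_contra h
    rw [integral_undef h] at ha_int
    exact zero_ne_one ha_int
  have hsub := Measure.measurePreserving_sub_left volume x
  have hax : Integrable (fun y => a (x - y)) :=
    (hsub.integrable_comp ha.aestronglyMeasurable).2 ha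
  have hw : Integrable (fun y : EuclideanSpace ℝ (Fin d) => (1 + ‖y‖) ^ (-q)) :=
    integrable_one_add_norm (by simpa using hdq)
  have hw_le_one (y : EuclideanSpace ℝ (Fin d)) : (1 + ‖y‖) ^ (-q) ≤ 1 :=
    Real.rpow_le_one_of_one_le_of_nonpos (by linarith [norm_nonneg y]) (neg_nonpos.2 hq)
  have haxw : Integrable (fun y => a (x - y) * (1 + ‖y‖) ^ (-q)) :=
    hax.mul_bdd hw.aestronglyMeasurable (c := 1) (.of_forall fun y => by
      rw [Real.norm_of_nonneg (Real.rpow_nonneg (by positivity) _)]; exact hw_le_one y)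
  have hag_x : ∀ᵐ y, a (x - y) ≤ g ‖x - y‖ :=
    hsub.quasiMeasurePreserving.tendsto_ae.eventually hag
  have hconv := integral_mul_le_of_le_on_of_ae_le_off (B := g ((1 - c) * ‖x‖))
    (measurableSet_le measurable_const measurable_norm) (fun y => ha_nn (x - y))
    (fun y => Real.rpow_nonneg (by positivity) _) hax hw haxw (by positivity) (hg_nn _)
    (fun y (hy : c * ‖x‖ ≤ ‖y‖) =>
      one_add_rpow_neg_le_of_mul_le hc0 hc1 (norm_nonneg x) hq hy)
    (hag_x.mono fun y hy (hyS : ¬ c * ‖x‖ ≤ ‖y‖) => hy.trans <|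
      hg_anti (mul_nonneg (by linarith) (norm_nonneg x)) (norm_nonneg _)
        (by linarith [norm_sub_norm_le x y, not_le.1 hyS]))
  rw [integral_sub_left_eq_self a volume x, ha_int, one_mul] at hconv
  exact hconv

theorem exists_forall_norm_ge_conv_le (ha_nn : ∀ x, 0 ≤ a x) (ha_int : ∫ x, a x = 1)
    (hg_nn : ∀ s, 0 ≤ g s) (hg_anti : AntitoneOn g (Ici 0)) (hag : ∀ᵐ x, a x ≤ g ‖x‖)
    (hdq : (d : ℝ) < q)
    (hdecay : ∀ θ ∈ Ioc (0 : ℝ) 1, (fun t => g (θ * t)) =o[atTop] fun t => (1 + t) ^ (-q))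
    {ε : ℝ} (hε : 0 < ε) :
    ∃ R, ∀ x : EuclideanSpace ℝ (Fin d), R ≤ ‖x‖ →
      conv a (fun y => (1 + ‖y‖) ^ (-q)) x ≤ (1 + ε) * (1 + ‖x‖) ^ (-q) := by
  have hq : 0 < q := (Nat.cast_nonneg d).trans_lt hdq
  set c : ℝ := (1 + ε / 2) ^ (-q⁻¹)
  have hc0 : 0 < c := by positivity
  have hc1 : c < 1 :=
    Real.rpow_lt_one_of_one_lt_of_neg (by linarith) (neg_neg_of_pos (inv_pos.2 hq))
  have hcq : c ^ (-q) = 1 + ε / 2 := by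
    rw [← Real.rpow_mul (by positivity), neg_mul_neg, inv_mul_cancel₀ hq.ne', Real.rpow_one]
  set I := ∫ y : EuclideanSpace ℝ (Fin d), (1 + ‖y‖) ^ (-q)
  have htail := ((hdecay (1 - c) ⟨by linarith, by linarith⟩).const_mul_left I).bound
    (half_pos hε)
  obtain ⟨R, hR⟩ := eventually_atTop.1 (htail.and (eventually_ge_atTop 0))
  refine ⟨R, fun x hx => ?_⟩
  obtain ⟨hRx, hx0⟩ := hR ‖x‖ hx
  have hI : 0 ≤ I := integral_nonneg fun y => Real.rpow_nonneg (by positivity) _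
  rw [Real.norm_of_nonneg (mul_nonneg hI (hg_nn _)),
    Real.norm_of_nonneg (Real.rpow_nonneg (by positivity) _)] at hRx
  have := conv_one_add_rpow_neg_le ha_nn ha_int hg_nn hg_anti hag hdq hc0 hc1.le x
  rw [hcq] at this
  linarith

end Convolution

theorem stmt_16_general {d : ℕ} (a : EuclideanSpace ℝ (Fin d) → ℝ)
    (ha_nn : ∀ x, 0 ≤ a x) (ha_int : ∫ x, a x = 1)
    (bp : ℝ → ℝ) (hbp_pos : ∀ s, 0 < bp s)
    (hbp_anti : StrictAntiOn bp (Set.Ici 0))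
    (M μ : ℝ) (hM : 0 < M) (hμ : 0 < μ)
    (b : ℝ → ℝ) (hb : b = fun s => M * (1 + s) ^ (-((d:ℝ) + μ)))
    (hlogeq : Tendsto (fun s => Real.log (bp s) / Real.log (b s)) atTop (nhds 1))
    (hab : ∀ᵐ x, a x ≤ bp ‖x‖) :
    ∀ α ∈ Set.Ioo (((d:ℝ) + μ / 2) / ((d:ℝ) + μ)) 1,
      Filter.limsup
          (fun l => ⨆ x ∈ {x : EuclideanSpace ℝ (Fin d) | b ‖x‖ ^ α < l},
            conv a (fun y => b ‖y‖ ^ α) x / b ‖x‖ ^ α)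
          (nhdsWithin 0 (Set.Ioi 0)) ≤ 1 := by
  rintro α ⟨hα₀, hα₁⟩
  subst hb
  set p : ℝ := (d : ℝ) + μ
  have hp : 0 < p := by positivity
  have hdq : (d : ℝ) < α * p := by
    have := (div_lt_iff₀ hp).1 hα₀
    linarith
  have hα : 0 < α := lt_of_le_of_lt (by positivity) hα₀
  have hbp_le : ∀ᶠ s in atTop, bp s ≤ (M * (1 + s) ^ (-p)) ^ ((1 + α) / 2) :=
    eventually_le_rpow_of_tendsto_log_div_log (.of_forall hbp_pos)
      ((eventually_ge_atTop 0).mono fun s hs => by positivity)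
      (by simpa using (tendsto_one_add_rpow_neg_atTop hp).const_mul M) (by linarith) hlogeq
  have hdecay : ∀ θ ∈ Ioc (0 : ℝ) 1,
      (fun t => bp (θ * t)) =o[atTop] fun t => (1 + t) ^ (-(α * p)) := fun θ hθ =>
    isLittleO_comp_const_mul_of_le_rpow hM.le (fun s => (hbp_pos s).le) hbp_le (by positivity)
      (by nlinarith) hθ.1 hθ.2
  have hω (x : EuclideanSpace ℝ (Fin d)) :
      (M * (1 + ‖x‖) ^ (-p)) ^ α = M ^ α * (1 + ‖x‖) ^ (-(α * p)) :=
    mul_rpow_neg_rpow hM.le (by positivity) p α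
  refine limsup_iSup_sublevel_le zero_le_one (fun x => ?_) fun ε hε => ?_
  · exact div_nonneg (integral_nonneg fun y => mul_nonneg (ha_nn _) (by positivity))
      (by positivity)
  obtain ⟨R, hR⟩ := exists_forall_norm_ge_conv_le ha_nn ha_int (fun s => (hbp_pos s).le)
    hbp_anti.antitoneOn hab hdq hdecay hε
  refine ⟨M ^ α * (1 + max R 0) ^ (-(α * p)), by positivity, fun x hx => ?_⟩
  simp only [hω, conv_const_mul] at hx ⊢
  have hRx : R ≤ ‖x‖ := by
    by_contra! h
    exact hx.not_ge (mul_le_mul_of_nonneg_left (Real.rpow_le_rpow_of_nonpos (by positivity)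
      (by linarith [le_max_left R 0]) (neg_nonpos.2 (by positivity))) (by positivity))
  rw [mul_div_mul_left _ _ (by positivity), div_le_iff₀ (by positivity)]
  exact hR x hRx

theorem stmt_16 {d : ℕ} (hd : 1 ≤ d) (a : EuclideanSpace ℝ (Fin d) → ℝ)
    (ha_meas : Measurable a) (ha_nn : ∀ x, 0 ≤ a x) (ha_int : ∫ x, a x = 1)
    (bp : ℝ → ℝ) (hbp_pos : ∀ s, 0 < bp s) (hbp_bdd : ∃ M, ∀ s, bp s ≤ M)
    (hbp_anti : StrictAntiOn bp (Set.Ici 0)) (hbp_to0 : Tendsto bp atTop (nhds 0))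
    (hbp_int : IntegrableOn (fun s => bp s * s ^ (d - 1)) (Set.Ioi 0))
    (M μ : ℝ) (hM : 0 < M) (hμ : 0 < μ)
    (b : ℝ → ℝ) (hb : b = fun s => M * (1 + s) ^ (-((d:ℝ) + μ)))
    (hlogeq : Tendsto (fun s => Real.log (bp s) / Real.log (b s)) atTop (nhds 1))
    (hab : ∀ᵐ x, a x ≤ bp ‖x‖) :
    ∀ α ∈ Set.Ioo (((d:ℝ) + μ / 2) / ((d:ℝ) + μ)) 1,
      Filter.limsup
          (fun l => ⨆ x ∈ {x : EuclideanSpace ℝ (Fin d) | b ‖x‖ ^ α < l},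
            conv a (fun y => b ‖y‖ ^ α) x / b ‖x‖ ^ α)
          (nhdsWithin 0 (Set.Ioi 0)) ≤ 1 :=
  stmt_16_general a ha_nn ha_int bp hbp_pos hbp_anti M μ hM hμ b hb hlogeq hab
end

section
/- Let b ∈ L¹(ℝ) be even, positive, decreasing to 0 on ℝ₊, and long-tailed, such that ∫_{r_b}^∞ b(s−τ) b(τ) dτ ≤ B b(s) for all s > ρ_b (some B, r_b, ρ_b > 0). Let a be a probability density on ℝ^d with lim_{|x|→∞} a(x) |x|^{d−1} / b(|x|) = 0. Then ω(x) := b(|x|) satisfies limsup_{λ→0+} sup_{x: ω(x)<λ} (a∗ω)(x)/ω(x) ≤ 1. -/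
/-!
Write `s = ‖x‖` and split `∫ a(y) b(‖x - y‖) dy` at a large radius `R`. On `‖y‖ ≤ R` we have
`b(‖x - y‖) ≤ b(s - R)`, which is at most `(1 + ε) b(s)` for large `s` because `b` is long-tailed,
and `a` has mass at most one. On `‖y‖ > R` the decay hypothesis on `a` gives
`a(y) ≤ ε b(‖y‖) / ‖y‖^(d-1)` and `b(‖x - y‖) ≤ b(s - ‖y‖)`; in polar coordinates the factor
`‖y‖^(d-1)` cancels against the Jacobian, leaving `ε σ_d ∫_R^∞ b(s - r) b(r) dr ≤ ε σ_d B b(s)`.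
-/

open Filter MeasureTheory

open Set Metric Module
open scoped Topology

namespace Function.Even

variable {b : ℝ → ℝ}

lemma apply_abs (hb : b.Even) (s : ℝ) : b |s| = b s := by
  rcases abs_cases s with ⟨h, -⟩ | ⟨h, -⟩ <;> rw [h]
  exact hb s

lemma le_of_abs_le (hb : b.Even) (hanti : AntitoneOn b (Ici 0)) {s t : ℝ} (h : |s| ≤ |t|) :
    b t ≤ b s := by
  rw [← hb.apply_abs t, ← hb.apply_abs s]
  exact hanti (abs_nonneg s) ((abs_nonneg s).trans h) h

lemma le_apply_zero (hb : b.Even) (hanti : AntitoneOn b (Ici 0)) (t : ℝ) : b t ≤ b 0 :=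
  hb.le_of_abs_le hanti (by simp)

lemma measurable_of_antitoneOn (hb : b.Even) (hanti : AntitoneOn b (Ici 0)) : Measurable b := by
  have h_anti : Antitone fun r => b (max r 0) := fun r r' h =>
    hanti (le_max_right r 0) (le_max_right r' 0) (max_le_max_right 0 h)
  have h_eq : b = (fun r => b (max r 0)) ∘ abs := funext fun s => by
    simp [hb.apply_abs]
  rw [h_eq]
  exact h_anti.measurable.comp measurable_abs

lemma integrable_mul_comp_sub (hb : b.Even) (hanti : AntitoneOn b (Ici 0))
    (hb_nn : ∀ s, 0 ≤ b s) (hb_int : Integrable b) (s : ℝ) :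
    Integrable fun r => b (s - r) * b r :=
  hb_int.bdd_mul (c := b 0)
    ((hb.measurable_of_antitoneOn hanti).comp (measurable_id.const_sub s)).aestronglyMeasurable
    (ae_of_all _ fun r => by
      rw [Real.norm_of_nonneg (hb_nn _)]
      exact hb.le_apply_zero hanti _)

end Function.Even

lemma eventually_apply_sub_le_of_tendsto_div {b : ℝ → ℝ} (hb_pos : ∀ s, 0 < b s) {τ : ℝ}
    (h : Tendsto (fun s => b (s + τ) / b s) atTop (𝓝 1)) {ε : ℝ} (hε : 0 < ε) :
    ∀ᶠ s in atTop, b (s - τ) ≤ (1 + ε) * b s := by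
  have h_shift : Tendsto (fun s => b (s - τ) / b s) atTop (𝓝 1) := by
    simpa [sub_eq_add_neg] using
      (h.comp (tendsto_atTop_add_const_right atTop (-τ) tendsto_id)).inv₀ one_ne_zero
  filter_upwards [h_shift.eventually (eventually_le_nhds (by linarith : (1 : ℝ) < 1 + ε))]
    with s hs
  rwa [div_le_iff₀ (hb_pos s)] at hs

lemma eventually_forall_norm_gt_le_of_tendsto {E : Type*} [SeminormedAddCommGroup E]
    {a : E → ℝ} {b : ℝ → ℝ} (hb_pos : ∀ s, 0 < b s) {k : ℕ}
    (ha : Tendsto (fun x => a x * ‖x‖ ^ k / b ‖x‖) (comap norm atTop) (𝓝 0))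
    {ε : ℝ} (hε : 0 < ε) :
    ∀ᶠ R in atTop, ∀ y : E, R < ‖y‖ → a y ≤ ε * b ‖y‖ / ‖y‖ ^ k := by
  obtain ⟨R₀, hR₀⟩ :=
    eventually_atTop.1 (eventually_comap.1 (ha.eventually (eventually_lt_nhds hε)))
  filter_upwards [eventually_ge_atTop R₀, eventually_ge_atTop 0] with R hR₀R hR y hy
  have hy_lt := hR₀ ‖y‖ (by linarith) y rfl
  rw [div_lt_iff₀ (hb_pos _)] at hy_lt
  rw [le_div_iff₀ (pow_pos (hR.trans_lt hy) k)]
  exact hy_lt.le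

lemma limsup_iSup_div_le {X : Type*} {f ω : X → ℝ} (hf : ∀ x, 0 ≤ f x) (hω : ∀ x, 0 < ω x)
    {c : ℝ} (hc : 0 ≤ c) (h : ∀ ε > 0, ∃ δ > 0, ∀ x, ω x < δ → f x ≤ (c + ε) * ω x) :
    limsup (fun l => ⨆ x ∈ {x | ω x < l}, f x / ω x) (𝓝[>] 0) ≤ c := by
  refine le_of_forall_pos_le_add fun ε hε => ?_
  have h_nn : ∀ l, 0 ≤ ⨆ x ∈ {x | ω x < l}, f x / ω x := fun l =>
    Real.iSup_nonneg fun x => Real.iSup_nonneg fun _ => div_nonneg (hf x) (hω x).le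
  obtain ⟨δ, hδ, hfδ⟩ := h ε hε
  refine limsup_le_of_le (isCoboundedUnder_le_of_le _ h_nn) ?_
  filter_upwards [Ioo_mem_nhdsGT hδ] with l hl
  refine Real.iSup_le (fun x => Real.iSup_le (fun hx => ?_) (by positivity)) (by positivity)
  rw [div_le_iff₀ (hω x)]
  exact hfδ x (hx.trans hl.2)

lemma conv_apply_eq_integral_mul_sub {d : ℕ} (f g : EuclideanSpace ℝ (Fin d) → ℝ)
    (x : EuclideanSpace ℝ (Fin d)) : conv f g x = ∫ y, f y * g (x - y) := by
  show ∫ y, f (x - y) * g y = _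
  simpa using integral_sub_left_eq_self (fun y => f y * g (x - y)) volume x

section Radial

variable {E : Type*} [NormedAddCommGroup E] [NormedSpace ℝ E] [Nontrivial E]
  [FiniteDimensional ℝ E] [MeasurableSpace E] [BorelSpace E]
  (μ : Measure E) [μ.IsAddHaarMeasure] {a : E → ℝ} {b : ℝ → ℝ}

lemma pow_mul_indicator_div_pow {g : ℝ → ℝ} {R : ℝ} (n : ℕ) {r : ℝ} (hr : 0 < r) :
    r ^ n • (Ioi R).indicator (fun r => g r / r ^ n) r = (Ioi R).indicator g r := by
  by_cases hrR : r ∈ Ioi R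
  · simp [indicator_of_mem hrR, mul_div_cancel₀ _ (pow_pos hr n).ne']
  · simp [indicator_of_notMem hrR]

lemma integrable_indicator_div_pow_comp_norm {g : ℝ → ℝ} {R : ℝ} (hg : IntegrableOn g (Ioi R)) :
    Integrable (fun x : E => (Ioi R).indicator (fun r => g r / r ^ (finrank ℝ E - 1)) ‖x‖) μ := by
  rw [integrable_fun_norm_addHaar μ]
  refine (integrableOn_congr_fun (fun r hr => pow_mul_indicator_div_pow _ hr)
    measurableSet_Ioi).2 ?_
  exact (hg.integrable_indicator measurableSet_Ioi).integrableOn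

lemma integral_indicator_div_pow_comp_norm (g : ℝ → ℝ) {R : ℝ} (hR : 0 ≤ R) :
    ∫ x : E, (Ioi R).indicator (fun r => g r / r ^ (finrank ℝ E - 1)) ‖x‖ ∂μ
      = finrank ℝ E * μ.real (ball 0 1) * ∫ r in Ioi R, g r := by
  rw [integral_fun_norm_addHaar μ,
    setIntegral_congr_fun measurableSet_Ioi (fun r hr => pow_mul_indicator_div_pow _ hr),
    setIntegral_indicator measurableSet_Ioi, Ioi_inter_Ioi, sup_eq_right.2 hR,
    nsmul_eq_mul, smul_eq_mul, mul_assoc]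

lemma integral_mul_comp_norm_sub_le (hb_even : b.Even) (hb_anti : AntitoneOn b (Ici 0))
    (hb_nn : ∀ s, 0 ≤ b s) (hb_int : Integrable b) (ha_nn : ∀ x, 0 ≤ a x)
    (ha_one : ∫ x, a x ∂μ = 1) {R ε : ℝ} (hR : 0 ≤ R)
    (ha_tail : ∀ y : E, R < ‖y‖ → a y ≤ ε * b ‖y‖ / ‖y‖ ^ (finrank ℝ E - 1))
    {x : E} (hx : R ≤ ‖x‖) :
    ∫ y, a y * b ‖x - y‖ ∂μ ≤
      b (‖x‖ - R) + ε * (finrank ℝ E * μ.real (ball 0 1) * ∫ r in Ioi R, b (‖x‖ - r) * b r) := by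
  set s := ‖x‖
  set G : ℝ → ℝ := (Ioi R).indicator fun r => b (s - r) * b r / r ^ (finrank ℝ E - 1)
  have ha := integrable_of_integral_eq_one ha_one
  have hG : Integrable (fun y : E => G ‖y‖) μ := integrable_indicator_div_pow_comp_norm μ
    (hb_even.integrable_mul_comp_sub hb_anti hb_nn hb_int s).integrableOn
  have hbm := hb_even.measurable_of_antitoneOn hb_anti
  have h_int : Integrable (fun y => a y * b ‖x - y‖) μ :=
    ha.mul_bdd (c := b 0) (hbm.comp (measurable_id.const_sub x).norm).aestronglyMeasurable
      (ae_of_all _ fun y => by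
        rw [Real.norm_of_nonneg (hb_nn _)]
        exact hb_even.le_apply_zero hb_anti _)
  have h_pt : ∀ y, a y * b ‖x - y‖ ≤ b (s - R) * a y + ε * G ‖y‖ := by
    intro y
    by_cases hy : ‖y‖ ≤ R
    · have h_near : b ‖x - y‖ ≤ b (s - R) := hb_even.le_of_abs_le hb_anti <| by
        rw [abs_of_nonneg (by linarith), abs_norm]
        linarith [norm_sub_norm_le x y]
      have hG0 : G ‖y‖ = 0 := indicator_of_notMem (not_lt.2 hy) _
      rw [hG0, mul_zero, add_zero, mul_comm]
      exact mul_le_mul_of_nonneg_right h_near (ha_nn y)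
    · rw [not_le] at hy
      have h_far : b ‖x - y‖ ≤ b (s - ‖y‖) := hb_even.le_of_abs_le hb_anti <| by
        rw [abs_norm]
        exact abs_norm_sub_norm_le x y
      have hGy : G ‖y‖ = b (s - ‖y‖) * b ‖y‖ / ‖y‖ ^ (finrank ℝ E - 1) := indicator_of_mem hy _
      calc a y * b ‖x - y‖ ≤ ε * b ‖y‖ / ‖y‖ ^ (finrank ℝ E - 1) * b (s - ‖y‖) :=
            mul_le_mul (ha_tail y hy) h_far (hb_nn _) ((ha_nn y).trans (ha_tail y hy))
        _ = ε * G ‖y‖ := by rw [hGy]; ring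
        _ ≤ b (s - R) * a y + ε * G ‖y‖ := le_add_of_nonneg_left (mul_nonneg (hb_nn _) (ha_nn y))
  calc ∫ y, a y * b ‖x - y‖ ∂μ ≤ ∫ y, (b (s - R) * a y + ε * G ‖y‖) ∂μ :=
        integral_mono h_int ((ha.const_mul _).add (hG.const_mul _)) h_pt
    _ = _ := by
        rw [integral_add (ha.const_mul _) (hG.const_mul _), integral_const_mul, integral_const_mul,
          ha_one, mul_one, integral_indicator_div_pow_comp_norm μ _ hR]

lemma exists_forall_norm_ge_integral_mul_comp_norm_sub_le (hb_even : b.Even)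
    (hb_anti : AntitoneOn b (Ici 0)) (hb_pos : ∀ s, 0 < b s) (hb_int : Integrable b)
    (hb_lt : ∀ τ ≥ (0 : ℝ), Tendsto (fun s => b (s + τ) / b s) atTop (𝓝 1))
    {B rb ρb : ℝ} (hsub : ∀ s > ρb, ∫ τ in Ioi rb, b (s - τ) * b τ ≤ B * b s)
    (ha_nn : ∀ x, 0 ≤ a x) (ha_one : ∫ x, a x ∂μ = 1)
    (ha_small : Tendsto (fun x => a x * ‖x‖ ^ (finrank ℝ E - 1) / b ‖x‖) (comap norm atTop) (𝓝 0))
    {ε : ℝ} (hε : 0 < ε) :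
    ∃ N, ∀ x : E, N ≤ ‖x‖ → ∫ y, a y * b ‖x - y‖ ∂μ ≤ (1 + ε) * b ‖x‖ := by
  set σ := finrank ℝ E * μ.real (ball (0 : E) 1)
  have hb_nn : ∀ s, 0 ≤ b s := fun s => (hb_pos s).le
  obtain ⟨ε₁, hε₁B, hε₁⟩ : ∃ ε₁ : ℝ, ε₁ * (σ * B) < ε / 2 ∧ 0 < ε₁ := by
    have h_lim : Tendsto (fun t : ℝ => t * (σ * B)) (𝓝[>] 0) (𝓝 0) := by
      simpa using ((continuous_mul_const (σ * B)).tendsto 0).mono_left nhdsWithin_le_nhds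
    exact ((h_lim.eventually (gt_mem_nhds (half_pos hε))).and self_mem_nhdsWithin).exists
  obtain ⟨R, hR_tail, hR0, hRrb⟩ :=
    ((eventually_forall_norm_gt_le_of_tendsto hb_pos ha_small hε₁).and
      ((eventually_ge_atTop 0).and (eventually_ge_atTop rb))).exists
  obtain ⟨N, hN⟩ := eventually_atTop.1
    ((eventually_apply_sub_le_of_tendsto_div hb_pos (hb_lt R hR0) (half_pos hε)).and
      ((eventually_ge_atTop R).and (eventually_gt_atTop ρb)))
  refine ⟨N, fun x hx => ?_⟩
  obtain ⟨h_shift, hxR, hxρ⟩ := hN ‖x‖ hx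
  have h_conv : ∫ r in Ioi R, b (‖x‖ - r) * b r ≤ B * b ‖x‖ :=
    (setIntegral_mono_set (hb_even.integrable_mul_comp_sub hb_anti hb_nn hb_int _).integrableOn
      (ae_of_all _ fun r => mul_nonneg (hb_nn _) (hb_nn r))
      (Ioi_subset_Ioi hRrb).eventuallyLE).trans (hsub _ hxρ)
  calc ∫ y, a y * b ‖x - y‖ ∂μ ≤ b (‖x‖ - R) + ε₁ * (σ * ∫ r in Ioi R, b (‖x‖ - r) * b r) :=
        integral_mul_comp_norm_sub_le μ hb_even hb_anti hb_nn hb_int ha_nn ha_one hR0 hR_tail hxR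
    _ ≤ (1 + ε / 2) * b ‖x‖ + ε₁ * (σ * (B * b ‖x‖)) := by gcongr
    _ ≤ (1 + ε) * b ‖x‖ := by nlinarith [hb_pos ‖x‖]

end Radial

theorem stmt_17_general {d : ℕ} (hd : 1 ≤ d)
    (b : ℝ → ℝ) (hb_int : Integrable b) (hb_even : ∀ s, b (-s) = b s)
    (hb_pos : ∀ s, 0 < b s) (hb_anti : AntitoneOn b (Set.Ici 0))
    (hb_lt : ∀ τ ≥ (0:ℝ), Tendsto (fun s => b (s + τ) / b s) atTop (nhds 1))
    (B rb ρb : ℝ)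
    (hsub : ∀ s > ρb, ∫ τ in Set.Ioi rb, b (s - τ) * b τ ≤ B * b s)
    (a : EuclideanSpace ℝ (Fin d) → ℝ)
    (ha_nn : ∀ x, 0 ≤ a x) (ha_int : ∫ x, a x = 1)
    (ha_small : Tendsto (fun x : EuclideanSpace ℝ (Fin d) =>
        a x * ‖x‖ ^ (d - 1) / b ‖x‖) (Filter.comap (fun x => ‖x‖) atTop) (nhds 0)) :
    Filter.limsup
        (fun l => ⨆ x ∈ {x : EuclideanSpace ℝ (Fin d) | b ‖x‖ < l},
          conv a (fun y => b ‖y‖) x / b ‖x‖)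
        (nhdsWithin 0 (Set.Ioi 0)) ≤ 1 := by
  have : Nontrivial (EuclideanSpace ℝ (Fin d)) :=
    Module.nontrivial_of_finrank_pos (R := ℝ) (by rw [finrank_euclideanSpace_fin]; omega)
  have h_conv (x : EuclideanSpace ℝ (Fin d)) :
      conv a (fun y => b ‖y‖) x = ∫ y, a y * b ‖x - y‖ := conv_apply_eq_integral_mul_sub _ _ x
  refine limsup_iSup_div_le (fun x => ?_) (fun x => hb_pos _) zero_le_one fun ε hε => ?_
  · rw [h_conv]
    exact integral_nonneg fun y => mul_nonneg (ha_nn y) (hb_pos _).le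
  obtain ⟨N, hN⟩ := exists_forall_norm_ge_integral_mul_comp_norm_sub_le volume hb_even hb_anti
    hb_pos hb_int hb_lt hsub ha_nn ha_int (by rwa [finrank_euclideanSpace_fin]) hε
  refine ⟨b N, hb_pos N, fun x hx => ?_⟩
  have hxN : N ≤ ‖x‖ := by
    by_contra! h
    exact (hb_anti (norm_nonneg x) ((norm_nonneg x).trans h.le) h.le).not_gt hx
  rw [h_conv]
  exact hN x hxN

theorem stmt_17 {d : ℕ} (hd : 1 ≤ d)
    (b : ℝ → ℝ) (hb_int : Integrable b) (hb_even : ∀ s, b (-s) = b s)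
    (hb_pos : ∀ s, 0 < b s) (hb_anti : AntitoneOn b (Set.Ici 0))
    (hb_to0 : Tendsto b atTop (nhds 0))
    (hb_lt : ∀ τ ≥ (0:ℝ), Tendsto (fun s => b (s + τ) / b s) atTop (nhds 1))
    (B rb ρb : ℝ) (hB : 0 < B) (hrb : 0 < rb) (hρb : 0 < ρb)
    (hsub : ∀ s > ρb, ∫ τ in Set.Ioi rb, b (s - τ) * b τ ≤ B * b s)
    (a : EuclideanSpace ℝ (Fin d) → ℝ)
    (ha_meas : Measurable a) (ha_nn : ∀ x, 0 ≤ a x) (ha_int : ∫ x, a x = 1)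
    (ha_small : Tendsto (fun x : EuclideanSpace ℝ (Fin d) =>
        a x * ‖x‖ ^ (d - 1) / b ‖x‖) (Filter.comap (fun x => ‖x‖) atTop) (nhds 0)) :
    Filter.limsup
        (fun l => ⨆ x ∈ {x : EuclideanSpace ℝ (Fin d) | b ‖x‖ < l},
          conv a (fun y => b ‖y‖) x / b ‖x‖)
        (nhdsWithin 0 (Set.Ioi 0)) ≤ 1 :=
  stmt_17_general hd b hb_int hb_even hb_pos hb_anti hb_lt B rb ρb hsub a ha_nn ha_int ha_small
end
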